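/- Let 𝒳 be a measurable space and ℋ a class of measurable binary classifiers h : 𝒳 → {0,1} whose VC dimension is at most d, i.e. no finite subset of 𝒳 of cardinality d+1 is shattered by ℋ. Let Pˢ and Pᵗ be probability measures on 𝒳 × {0,1} (the labeled source and target distributions) with marginals Dˢ and Dᵗ on 𝒳. Fix N ≥ 1 and ρ ∈ (0,1). Then with probability at least 1 − ρ over the draw of i.i.d. unlabeled samples S = (x₁,…,x_N) distributed according to (Dˢ)^N and T = (x′₁,…,x′_N) distributed according to (Dᵗ)^N, every h ∈ ℋ satisfies εᵗ(h) ≤ εˢ(h) + (1/2)·d̂_{ℋΔℋ}(S,T) + 4·√((2d·log(2N) + log(2/ρ))/N) + Λ*, where Λ* = inf_{h∈ℋ} ( εˢ(h) + εᵗ(h) ) is the minimum combined error probability on both domains. -/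

import Mathlib

open MeasureTheory

section AuxChernoff
open Real


lemma exp_quad {l : ℝ} (h0 : 0 ≤ l) (h1 : l ≤ 1) : Real.exp l ≤ 1 + l + l ^ 2 := by
  have habs : |l| ≤ 1 := by rwa [abs_of_nonneg h0]
  have := Real.exp_bound habs (n := 2) (by norm_num)
  have h2 : |Real.exp l - (1 + l)| ≤ |l| ^ 2 * (3 / 4) := by
    have hs : ∑ i ∈ Finset.range 2, l ^ i / (Nat.factorial i : ℝ) = 1 + l := by
      simp [Finset.sum_range_succ, Nat.factorial]
    calc |Real.exp l - (1 + l)| = |Real.exp l - ∑ i ∈ Finset.range 2, l ^ i / (Nat.factorial i : ℝ)| := by rw [hs]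
    _ ≤ |l| ^ 2 * ((2 : ℕ).succ / ((Nat.factorial 2 : ℝ) * 2)) := this
    _ = |l| ^ 2 * (3 / 4) := by norm_num [Nat.factorial]
  rw [abs_of_nonneg h0] at h2
  have := abs_le.mp h2
  nlinarith [sq_nonneg l]

lemma chernoff_pi {Ω : Type*} [MeasurableSpace Ω] (ν : Measure Ω) [IsProbabilityMeasure ν]
    {A : Set Ω} (hA : MeasurableSet A) (N : ℕ) (a lam : ℝ) (hl0 : 0 ≤ lam) (hl1 : lam ≤ 1) :
    (Measure.pi fun _ : Fin N => ν)
      {S | (N : ℝ) * (ν A).toReal + N * a ≤ ∑ i : Fin N, A.indicator (fun _ => (1 : ℝ)) (S i)}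
      ≤ ENNReal.ofReal (Real.exp (N * (lam ^ 2 - lam * a))) := by
  classical
  letI : MeasureSpace Ω := { toMeasurableSpace := inferInstance, volume := ν }
  haveI : IsProbabilityMeasure (volume : Measure Ω) := ‹IsProbabilityMeasure ν›
  set p : ℝ := (ν A).toReal with hp
  have hp0 : 0 ≤ p := ENNReal.toReal_nonneg
  have hp1 : p ≤ 1 := by
    rw [hp]
    exact ENNReal.toReal_le_of_le_ofReal zero_le_one (by simpa using prob_le_one (μ := ν) (s := A))
  set g : Ω → ℝ := fun x => Real.exp (lam * A.indicator (fun _ => (1 : ℝ)) x) with hg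
  have hgeq : g = fun x => A.indicator (fun _ => Real.exp lam - 1) x + 1 := by
    funext x
    by_cases hx : x ∈ A <;> simp [hg, Set.indicator_of_mem, Set.indicator_of_notMem, hx]
  have hgint : Integrable g ν := by
    rw [hgeq]
    exact (((integrable_const (Real.exp lam - 1)).indicator hA)).add (integrable_const 1)
  have hgval : ∫ x, g x ∂ν = 1 + p * (Real.exp lam - 1) := by
    rw [hgeq]
    rw [integral_add ((integrable_const (Real.exp lam - 1)).indicator hA) (integrable_const 1)]
    rw [integral_indicator_const _ hA, integral_const]
    simp [smul_eq_mul, mul_comm]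
    exact (add_comm _ _).trans rfl
  set X : (Fin N → Ω) → ℝ := fun S => ∑ i : Fin N, A.indicator (fun _ => (1 : ℝ)) (S i) with hX
  set μpi : Measure (Fin N → Ω) := Measure.pi fun _ : Fin N => ν with hμpi
  have hvol : μpi = (volume : Measure (Fin N → Ω)) := rfl
  have hprodeq : (fun S : Fin N → Ω => Real.exp (lam * X S)) = fun S => ∏ i : Fin N, g (S i) := by
    funext S
    rw [hX]
    simp only [Finset.mul_sum, Real.exp_sum, hg]
  have hXint : Integrable (fun S => Real.exp (lam * X S)) μpi := by
    rw [hprodeq, hvol]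
    exact Integrable.fintype_prod (𝕜 := ℝ) (f := fun _ : Fin N => g) (fun _ => hgint)
  have hmgf : ProbabilityTheory.mgf X μpi lam = (1 + p * (Real.exp lam - 1)) ^ N := by
    rw [ProbabilityTheory.mgf]
    calc ∫ S, Real.exp (lam * X S) ∂μpi = ∫ S : Fin N → Ω, ∏ i : Fin N, g (S i) := by
          rw [hprodeq, hvol]
    _ = (∫ x, g x) ^ Fintype.card (Fin N) := integral_fintype_prod_eq_pow g
    _ = (1 + p * (Real.exp lam - 1)) ^ N := by
          rw [Fintype.card_fin]
          exact congrArg (fun r => r ^ N) hgval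
  have hcher := ProbabilityTheory.measure_ge_le_exp_mul_mgf (μ := μpi) (X := X)
    ((N : ℝ) * p + N * a) hl0 hXint
  rw [hmgf] at hcher
  -- final numeric bound
  have hbase : 0 ≤ 1 + p * (Real.exp lam - 1) := by
    nlinarith [Real.add_one_le_exp lam, Real.exp_pos lam]
  have hexp1 : 1 + p * (Real.exp lam - 1) ≤ Real.exp (p * (Real.exp lam - 1)) := by
    have := Real.add_one_le_exp (p * (Real.exp lam - 1))
    linarith
  have hpow : (1 + p * (Real.exp lam - 1)) ^ N ≤ Real.exp (N * (p * (Real.exp lam - 1))) := by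
    calc (1 + p * (Real.exp lam - 1)) ^ N ≤ (Real.exp (p * (Real.exp lam - 1))) ^ N :=
          pow_le_pow_left₀ hbase hexp1 N
    _ = Real.exp (N * (p * (Real.exp lam - 1))) := by
          rw [← Real.exp_nat_mul]
  have hfin : Real.exp (-lam * ((N : ℝ) * p + N * a)) * (1 + p * (Real.exp lam - 1)) ^ N
      ≤ Real.exp (N * (lam ^ 2 - lam * a)) := by
    calc Real.exp (-lam * ((N : ℝ) * p + N * a)) * (1 + p * (Real.exp lam - 1)) ^ N
        ≤ Real.exp (-lam * ((N : ℝ) * p + N * a)) * Real.exp (N * (p * (Real.exp lam - 1))) := by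
          exact mul_le_mul_of_nonneg_left hpow (Real.exp_pos _).le
    _ = Real.exp (-lam * ((N : ℝ) * p + N * a) + N * (p * (Real.exp lam - 1))) := by
          rw [← Real.exp_add]
    _ ≤ Real.exp (N * (lam ^ 2 - lam * a)) := by
          apply Real.exp_le_exp.mpr
          have hq : Real.exp lam - 1 - lam ≤ lam ^ 2 := by
            have := exp_quad hl0 hl1; linarith
          have hq0 : 0 ≤ Real.exp lam - 1 - lam := by
            have := Real.add_one_le_exp lam; linarith
          have hple : p * (Real.exp lam - 1 - lam) ≤ lam ^ 2 := by
            nlinarith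
          have hN0 : (0 : ℝ) ≤ N := Nat.cast_nonneg N
          nlinarith
  have hfinal : (μpi {S | (N : ℝ) * p + N * a ≤ X S}).toReal ≤ Real.exp (N * (lam ^ 2 - lam * a)) :=
    le_trans hcher hfin
  calc μpi {S | (N : ℝ) * p + N * a ≤ X S}
      = ENNReal.ofReal ((μpi {S | (N : ℝ) * p + N * a ≤ X S}).toReal) := by
        rw [ENNReal.ofReal_toReal (measure_ne_top _ _)]
  _ ≤ ENNReal.ofReal (Real.exp (N * (lam ^ 2 - lam * a))) := ENNReal.ofReal_le_ofReal hfinal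

lemma dev_bound {Ω : Type*} [MeasurableSpace Ω] (ν : Measure Ω) [IsProbabilityMeasure ν]
    {A : Set Ω} (hA : MeasurableSet A) (N : ℕ) (hN : 1 ≤ N) (ρ : ℝ) (hρ0 : 0 < ρ) (hρ1 : ρ < 1) :
    (Measure.pi fun _ : Fin N => ν)
      {S | (N : ℝ) * (2 * Real.sqrt (Real.log (4 / ρ) / N)) <
        |(∑ i : Fin N, A.indicator (fun _ => (1 : ℝ)) (S i)) - N * (ν A).toReal|}
      ≤ ENNReal.ofReal (ρ / 2) := by
  classical
  set L4 : ℝ := Real.log (4 / ρ) with hL4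
  have hL40 : 0 ≤ L4 := Real.log_nonneg (by rw [le_div_iff₀ hρ0]; linarith)
  have hN0 : (0 : ℝ) < N := by exact_mod_cast Nat.pos_of_ne_zero (by omega)
  set a : ℝ := 2 * Real.sqrt (L4 / N) with ha
  have ha0 : 0 ≤ a := by positivity
  set p : ℝ := (ν A).toReal with hp
  have hp0 : 0 ≤ p := ENNReal.toReal_nonneg
  have hp1 : p ≤ 1 := by
    rw [hp]
    exact ENNReal.toReal_le_of_le_ofReal zero_le_one (by simpa using prob_le_one (μ := ν) (s := A))
  set X : (Fin N → Ω) → ℝ := fun S => ∑ i : Fin N, A.indicator (fun _ => (1 : ℝ)) (S i) with hX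
  have hXbound : ∀ S, 0 ≤ X S ∧ X S ≤ N := by
    intro S
    constructor
    · apply Finset.sum_nonneg
      intro i _
      exact Set.indicator_nonneg (fun _ _ => zero_le_one) _
    · calc X S ≤ ∑ _i : Fin N, (1 : ℝ) := by
            apply Finset.sum_le_sum
            intro i _
            exact Set.indicator_le_self' (fun _ _ => zero_le_one) _
      _ = N := by simp
  by_cases hbig : 1 ≤ a
  · have : {S : Fin N → Ω | (N : ℝ) * a < |X S - N * p|} = ∅ := by
      ext S
      simp only [Set.mem_setOf_eq, Set.mem_empty_iff_false, iff_false, not_lt]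
      obtain ⟨h1, h2⟩ := hXbound S
      have : |X S - N * p| ≤ N := by
        rw [abs_le]
        constructor <;> nlinarith
      calc |X S - N * p| ≤ (N : ℝ) := this
      _ = N * 1 := by ring
      _ ≤ N * a := by nlinarith
    rw [this]
    simp
  · push_neg at hbig
    set lam : ℝ := a / 2 with hlam
    have hl0 : 0 ≤ lam := by positivity
    have hl1 : lam ≤ 1 := by rw [hlam]; linarith
    have hupper := chernoff_pi ν hA N a lam hl0 hl1
    have hlower := chernoff_pi ν hA.compl N a lam hl0 hl1
    have hcompl : (ν Aᶜ).toReal = 1 - p := by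
      have h1 : ν Aᶜ = 1 - ν A := prob_compl_eq_one_sub hA
      rw [h1, ENNReal.toReal_sub_of_le (prob_le_one) ENNReal.one_ne_top]
      simp [hp]
    have hXc : ∀ S : Fin N → Ω,
        (∑ i : Fin N, Aᶜ.indicator (fun _ => (1 : ℝ)) (S i)) = N - X S := by
      intro S
      have : ∀ i : Fin N, Aᶜ.indicator (fun _ => (1 : ℝ)) (S i)
          = 1 - A.indicator (fun _ => (1 : ℝ)) (S i) := by
        intro i
        by_cases hx : S i ∈ A <;> simp [Set.indicator_of_mem, Set.indicator_of_notMem, hx]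
      rw [Finset.sum_congr rfl (fun i _ => this i)]
      rw [Finset.sum_sub_distrib]
      simp [hX]
    have hsubset : {S : Fin N → Ω | (N : ℝ) * a < |X S - N * p|} ⊆
        {S | (N : ℝ) * (ν A).toReal + N * a ≤ X S} ∪
        {S | (N : ℝ) * (ν Aᶜ).toReal + N * a ≤
          ∑ i : Fin N, Aᶜ.indicator (fun _ => (1 : ℝ)) (S i)} := by
      intro S hS
      simp only [Set.mem_setOf_eq] at hS
      rcases lt_abs.mp hS with h | h
      · left
        simp only [Set.mem_setOf_eq, ← hp]
        linarith
      · right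
        simp only [Set.mem_setOf_eq, hcompl, hXc S]
        linarith
    have hval : Real.exp ((N : ℝ) * (lam ^ 2 - lam * a)) = ρ / 4 := by
      have hsq : Real.sqrt (L4 / N) ^ 2 = L4 / N :=
        Real.sq_sqrt (by positivity)
      have hNne : (N : ℝ) ≠ 0 := ne_of_gt hN0
      have ha2 : a ^ 2 = 4 * (L4 / N) := by
        rw [ha, mul_pow, hsq]; ring
      have harg : (N : ℝ) * (lam ^ 2 - lam * a) = -L4 := by
        rw [hlam]
        rw [show (a / 2) ^ 2 - a / 2 * a = -(a ^ 2 / 4) by ring, ha2]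
        field_simp
      rw [harg, Real.exp_neg, hL4, Real.exp_log (by positivity)]
      rw [show (4 / ρ)⁻¹ = ρ / 4 by field_simp]
    calc (Measure.pi fun _ : Fin N => ν) {S | (N : ℝ) * a < |X S - N * p|}
        ≤ (Measure.pi fun _ : Fin N => ν) ({S | (N : ℝ) * (ν A).toReal + N * a ≤ X S} ∪
          {S | (N : ℝ) * (ν Aᶜ).toReal + N * a ≤
            ∑ i : Fin N, Aᶜ.indicator (fun _ => (1 : ℝ)) (S i)}) := measure_mono hsubset
    _ ≤ _ + _ := measure_union_le _ _
    _ ≤ ENNReal.ofReal (ρ / 4) + ENNReal.ofReal (ρ / 4) := by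
        rw [← hval]
        exact add_le_add hupper hlower
    _ = ENNReal.ofReal (ρ / 2) := by
        rw [← ENNReal.ofReal_add (by linarith) (by linarith)]
        congr 1
        ring

end AuxChernoff


/-- Cross-receiver generalization error bound (Lemma 1 of the paper):
with probability at least `1 - ρ` over the draw of i.i.d. unlabeled samples of
size `N` from the source and target marginals, every hypothesis `h ∈ ℋ` (a class
of binary classifiers of VC dimension at most `d`) satisfies
`εᵗ(h) ≤ εˢ(h) + (1/2) d̂_{ℋΔℋ}(S,T) + 4 √((2 d log (2N) + log (2/ρ))/N) + Λ*`. -/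
theorem cross_receiver_generalization_bound
    {𝒳 : Type*} [MeasurableSpace 𝒳]
    (ℋ : Set (𝒳 → Bool))
    (hmeas : ∀ h ∈ ℋ, Measurable h)
    (d : ℕ)
    (hVC : ∀ F : Finset 𝒳, F.card = d + 1 →
      ¬ (∀ f : 𝒳 → Bool, ∃ h ∈ ℋ, ∀ x ∈ F, h x = f x))
    (Ps Pt : Measure (𝒳 × Bool))
    [IsProbabilityMeasure Ps] [IsProbabilityMeasure Pt]
    (N : ℕ) (hN : 1 ≤ N) (ρ : ℝ) (hρ : ρ ∈ Set.Ioo (0 : ℝ) 1)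
    -- expected error probabilities on the source and target domains
    (εs εt : (𝒳 → Bool) → ℝ)
    (hεs : ∀ h, εs h = (Ps {p : 𝒳 × Bool | h p.1 ≠ p.2}).toReal)
    (hεt : ∀ h, εt h = (Pt {p : 𝒳 × Bool | h p.1 ≠ p.2}).toReal)
    -- marginal (unlabeled) distributions on 𝒳
    (Ds Dt : Measure 𝒳)
    (hDs : Ds = Ps.map Prod.fst) (hDt : Dt = Pt.map Prod.fst)
    -- empirical ℋΔℋ-divergence between finite samples
    (dHH : (Fin N → 𝒳) → (Fin N → 𝒳) → ℝ)
    (hdHH : ∀ S T, dHH S T =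
      2 * sSup { r : ℝ | ∃ h ∈ ℋ, ∃ h' ∈ ℋ, r =
        |((Finset.univ.filter fun i : Fin N => h (S i) ≠ h' (S i)).card : ℝ) / N
          - ((Finset.univ.filter fun i : Fin N => h (T i) ≠ h' (T i)).card : ℝ) / N| })
    -- minimum combined error probability on both domains
    (Λ : ℝ) (hΛ : Λ = sInf { r : ℝ | ∃ h ∈ ℋ, r = εs h + εt h }) :
    ENNReal.ofReal (1 - ρ) ≤
      ((Measure.pi fun _ : Fin N => Ds).prod (Measure.pi fun _ : Fin N => Dt))
        {ST : (Fin N → 𝒳) × (Fin N → 𝒳) | ∀ h ∈ ℋ,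
          εt h ≤ εs h + (1 / 2) * dHH ST.1 ST.2
            + 4 * Real.sqrt ((2 * d * Real.log (2 * N) + Real.log (2 / ρ)) / N)
            + Λ} := by
  classical
  obtain ⟨hρ0, hρ1⟩ := hρ
  subst hDs hDt hΛ
  haveI hDsP : IsProbabilityMeasure (Ps.map Prod.fst) :=
    Measure.isProbabilityMeasure_map measurable_fst.aemeasurable
  haveI hDtP : IsProbabilityMeasure (Pt.map Prod.fst) :=
    Measure.isProbabilityMeasure_map measurable_fst.aemeasurable
  set μ := ((Measure.pi fun _ : Fin N => Ps.map Prod.fst).prod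
    (Measure.pi fun _ : Fin N => Pt.map Prod.fst)) with hμ
  haveI : IsProbabilityMeasure μ := by
    rw [hμ]; infer_instance
  set t : ℝ := 4 * Real.sqrt ((2 * (d : ℝ) * Real.log (2 * (N : ℝ)) + Real.log (2 / ρ)) / (N : ℝ))
    with hT
  have ht0 : 0 ≤ t := by positivity
  have hN0 : (0 : ℝ) < N := by exact_mod_cast Nat.pos_of_ne_zero (by omega)
  have hNne : (N : ℝ) ≠ 0 := ne_of_gt hN0
  -- basic error facts
  have hεs0 : ∀ h, 0 ≤ εs h := fun h => by rw [hεs]; exact ENNReal.toReal_nonneg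
  have hεt0 : ∀ h, 0 ≤ εt h := fun h => by rw [hεt]; exact ENNReal.toReal_nonneg
  -- measurability of disagreement sets
  have hAmeas : ∀ h ∈ ℋ, ∀ h' ∈ ℋ, MeasurableSet {x : 𝒳 | h x ≠ h' x} := by
    intro h hh h' hh'
    have : {x : 𝒳 | h x ≠ h' x}
        = (fun x => (h x, h' x)) ⁻¹' {q : Bool × Bool | q.1 ≠ q.2} := rfl
    rw [this]
    exact ((hmeas h hh).prodMk (hmeas h' hh')) (Set.to_countable _).measurableSet
  -- boundedness of the empirical divergence set
  have hbddE : ∀ S T : Fin N → 𝒳, BddAbove { r : ℝ | ∃ h ∈ ℋ, ∃ h' ∈ ℋ, r =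
      |((Finset.univ.filter fun i : Fin N => h (S i) ≠ h' (S i)).card : ℝ) / N
        - ((Finset.univ.filter fun i : Fin N => h (T i) ≠ h' (T i)).card : ℝ) / N| } := by
    intro S T
    refine ⟨1, ?_⟩
    rintro r ⟨h, hh, h', hh', rfl⟩
    have hc1 : ((Finset.univ.filter fun i : Fin N => h (S i) ≠ h' (S i)).card : ℝ) ≤ N := by
      exact_mod_cast le_trans (Finset.card_filter_le _ _) (le_of_eq (Finset.card_univ.trans (Fintype.card_fin N)))
    have hc2 : ((Finset.univ.filter fun i : Fin N => h (T i) ≠ h' (T i)).card : ℝ) ≤ N := by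
      exact_mod_cast le_trans (Finset.card_filter_le _ _) (le_of_eq (Finset.card_univ.trans (Fintype.card_fin N)))
    have h01 : (0:ℝ) ≤ (Finset.univ.filter fun i : Fin N => h (S i) ≠ h' (S i)).card := Nat.cast_nonneg _
    have h02 : (0:ℝ) ≤ (Finset.univ.filter fun i : Fin N => h (T i) ≠ h' (T i)).card := Nat.cast_nonneg _
    have hx1 : ((Finset.univ.filter fun i : Fin N => h (S i) ≠ h' (S i)).card : ℝ) / N ≤ 1 := by
      rw [div_le_one hN0]; exact hc1
    have hy1 : ((Finset.univ.filter fun i : Fin N => h (T i) ≠ h' (T i)).card : ℝ) / N ≤ 1 := by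
      rw [div_le_one hN0]; exact hc2
    have hx0 : (0:ℝ) ≤ ((Finset.univ.filter fun i : Fin N => h (S i) ≠ h' (S i)).card : ℝ) / N := by
      positivity
    have hy0 : (0:ℝ) ≤ ((Finset.univ.filter fun i : Fin N => h (T i) ≠ h' (T i)).card : ℝ) / N := by
      positivity
    rw [abs_le]
    constructor <;> linarith
  -- the case of an empty hypothesis class
  rcases Set.eq_empty_or_nonempty ℋ with hempty | ⟨h00, hh00⟩
  · have huniv : {ST : (Fin N → 𝒳) × (Fin N → 𝒳) | ∀ h ∈ ℋ,
        εt h ≤ εs h + (1 / 2) * dHH ST.1 ST.2 + t + sInf { r : ℝ | ∃ h ∈ ℋ, r = εs h + εt h }}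
        = Set.univ := by
      apply Set.eq_univ_of_forall
      intro ST h hh
      rw [hempty] at hh
      exact absurd hh (Set.notMem_empty h)
    rw [huniv, measure_univ]
    exact ENNReal.ofReal_le_one.mpr (by linarith)
  -- nonempty class: key deterministic inequalities
  have hΛne : { r : ℝ | ∃ h ∈ ℋ, r = εs h + εt h }.Nonempty := ⟨εs h00 + εt h00, h00, hh00, rfl⟩
  have key1 : ∀ h ∈ ℋ, ∀ h' ∈ ℋ,
      εt h ≤ εt h' + ((Pt.map Prod.fst) {x : 𝒳 | h x ≠ h' x}).toReal := by
    intro h hh h' hh'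
    have hsub : {p : 𝒳 × Bool | h p.1 ≠ p.2} ⊆
        {p : 𝒳 × Bool | h' p.1 ≠ p.2} ∪ (Prod.fst ⁻¹' {x : 𝒳 | h x ≠ h' x}) := by
      intro p hp
      by_cases hc : h' p.1 = p.2
      · right
        simp only [Set.mem_preimage, Set.mem_setOf_eq]
        rw [hc]
        exact hp
      · left
        exact hc
    have hle : Pt {p : 𝒳 × Bool | h p.1 ≠ p.2} ≤
        Pt {p : 𝒳 × Bool | h' p.1 ≠ p.2} + Pt (Prod.fst ⁻¹' {x : 𝒳 | h x ≠ h' x}) :=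
      le_trans (measure_mono hsub) (measure_union_le _ _)
    have hmap : (Pt.map Prod.fst) {x : 𝒳 | h x ≠ h' x}
        = Pt (Prod.fst ⁻¹' {x : 𝒳 | h x ≠ h' x}) :=
      Measure.map_apply measurable_fst (hAmeas h hh h' hh')
    rw [hεt, hεt, hmap]
    calc (Pt {p : 𝒳 × Bool | h p.1 ≠ p.2}).toReal
        ≤ ((Pt {p : 𝒳 × Bool | h' p.1 ≠ p.2} + Pt (Prod.fst ⁻¹' {x : 𝒳 | h x ≠ h' x}))).toReal := by
          apply ENNReal.toReal_mono _ hle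
          exact ENNReal.add_ne_top.mpr ⟨measure_ne_top _ _, measure_ne_top _ _⟩
    _ = _ := ENNReal.toReal_add (measure_ne_top _ _) (measure_ne_top _ _)
  have key2 : ∀ h ∈ ℋ, ∀ h' ∈ ℋ,
      ((Ps.map Prod.fst) {x : 𝒳 | h x ≠ h' x}).toReal ≤ εs h + εs h' := by
    intro h hh h' hh'
    have hsub : (Prod.fst ⁻¹' {x : 𝒳 | h x ≠ h' x}) ⊆
        {p : 𝒳 × Bool | h p.1 ≠ p.2} ∪ {p : 𝒳 × Bool | h' p.1 ≠ p.2} := by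
      intro p hp
      simp only [Set.mem_preimage, Set.mem_setOf_eq] at hp
      by_cases hc : h p.1 = p.2
      · right
        simp only [Set.mem_setOf_eq, Set.mem_union]
        rw [← hc]
        exact fun hcontra => hp hcontra.symm
      · left
        exact hc
    have hle : Ps (Prod.fst ⁻¹' {x : 𝒳 | h x ≠ h' x}) ≤
        Ps {p : 𝒳 × Bool | h p.1 ≠ p.2} + Ps {p : 𝒳 × Bool | h' p.1 ≠ p.2} :=
      le_trans (measure_mono hsub) (measure_union_le _ _)
    have hmap : (Ps.map Prod.fst) {x : 𝒳 | h x ≠ h' x}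
        = Ps (Prod.fst ⁻¹' {x : 𝒳 | h x ≠ h' x}) :=
      Measure.map_apply measurable_fst (hAmeas h hh h' hh')
    rw [hεs, hεs, hmap]
    calc (Ps (Prod.fst ⁻¹' {x : 𝒳 | h x ≠ h' x})).toReal
        ≤ ((Ps {p : 𝒳 × Bool | h p.1 ≠ p.2} + Ps {p : 𝒳 × Bool | h' p.1 ≠ p.2})).toReal := by
          apply ENNReal.toReal_mono _ hle
          exact ENNReal.add_ne_top.mpr ⟨measure_ne_top _ _, measure_ne_top _ _⟩
    _ = _ := ENNReal.toReal_add (measure_ne_top _ _) (measure_ne_top _ _)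
  -- nonnegativity of the empirical divergence
  have hdHH0 : ∀ S T : Fin N → 𝒳, 0 ≤ dHH S T := by
    intro S T
    rw [hdHH]
    have h0mem : (0:ℝ) ∈ { r : ℝ | ∃ h ∈ ℋ, ∃ h' ∈ ℋ, r =
        |((Finset.univ.filter fun i : Fin N => h (S i) ≠ h' (S i)).card : ℝ) / N
          - ((Finset.univ.filter fun i : Fin N => h (T i) ≠ h' (T i)).card : ℝ) / N| } := by
      refine ⟨h00, hh00, h00, hh00, ?_⟩
      simp
    have := le_csSup (hbddE S T) h0mem
    linarith
  -- Case d = 0 : all hypotheses coincide pointwise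
  rcases Nat.eq_zero_or_pos d with hd0 | hd1
  · subst hd0
    have hagree : ∀ h ∈ ℋ, ∀ h' ∈ ℋ, ∀ x, h x = h' x := by
      intro h hh h' hh' x
      by_contra hne
      apply hVC {x} (Finset.card_singleton x)
      intro f
      by_cases hfx : h x = f x
      · exact ⟨h, hh, fun y hy => by rw [Finset.mem_singleton] at hy; subst hy; exact hfx⟩
      · refine ⟨h', hh', fun y hy => ?_⟩
        rw [Finset.mem_singleton] at hy; subst hy
        revert hne hfx
        cases h y <;> cases h' y <;> cases f y <;> simp
    have hkey : ∀ ST : (Fin N → 𝒳) × (Fin N → 𝒳), ∀ h ∈ ℋ,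
        εt h ≤ εs h + (1 / 2) * dHH ST.1 ST.2 + t + sInf { r : ℝ | ∃ h ∈ ℋ, r = εs h + εt h } := by
      intro ST h hh
      have hΛge : εt h ≤ sInf { r : ℝ | ∃ h ∈ ℋ, r = εs h + εt h } := by
        apply le_csInf hΛne
        rintro r ⟨h', hh', rfl⟩
        have hA : {x : 𝒳 | h x ≠ h' x} = ∅ := by
          ext x; simp [hagree h hh h' hh' x]
        have := key1 h hh h' hh'
        rw [hA] at this
        simp only [measure_empty, ENNReal.toReal_zero, add_zero] at this
        linarith [hεs0 h']
      have := hdHH0 ST.1 ST.2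
      linarith [hεs0 h]
    have huniv : {ST : (Fin N → 𝒳) × (Fin N → 𝒳) | ∀ h ∈ ℋ,
        εt h ≤ εs h + (1 / 2) * dHH ST.1 ST.2 + t + sInf { r : ℝ | ∃ h ∈ ℋ, r = εs h + εt h }}
        = Set.univ := Set.eq_univ_of_forall (fun ST => hkey ST)
    rw [huniv, measure_univ]
    exact ENNReal.ofReal_le_one.mpr (by linarith)
  -- main case : d ≥ 1
  set Etrue : Set ℝ := {r : ℝ | ∃ h ∈ ℋ, ∃ h' ∈ ℋ, r =
      |((Ps.map Prod.fst) {x : 𝒳 | h x ≠ h' x}).toReal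
        - ((Pt.map Prod.fst) {x : 𝒳 | h x ≠ h' x}).toReal|} with hEdef
  have hEne : Etrue.Nonempty := ⟨_, h00, hh00, h00, hh00, rfl⟩
  have hprobS : ∀ s : Set 𝒳, ((Ps.map Prod.fst) s).toReal ≤ 1 := by
    intro s
    have := ENNReal.toReal_mono ENNReal.one_ne_top (prob_le_one (μ := Ps.map Prod.fst) (s := s))
    simpa using this
  have hprobT : ∀ s : Set 𝒳, ((Pt.map Prod.fst) s).toReal ≤ 1 := by
    intro s
    have := ENNReal.toReal_mono ENNReal.one_ne_top (prob_le_one (μ := Pt.map Prod.fst) (s := s))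
    simpa using this
  have hEbdd : BddAbove Etrue := by
    refine ⟨1, ?_⟩
    rintro r ⟨h, hh, h', hh', rfl⟩
    have h1 := hprobS {x : 𝒳 | h x ≠ h' x}
    have h2 := hprobT {x : 𝒳 | h x ≠ h' x}
    have h3 : (0:ℝ) ≤ ((Ps.map Prod.fst) {x : 𝒳 | h x ≠ h' x}).toReal := ENNReal.toReal_nonneg
    have h4 : (0:ℝ) ≤ ((Pt.map Prod.fst) {x : 𝒳 | h x ≠ h' x}).toReal := ENNReal.toReal_nonneg
    rw [abs_le]
    constructor <;> linarith
  have key3 : ∀ h ∈ ℋ, ∀ h' ∈ ℋ,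
      ((Pt.map Prod.fst) {x : 𝒳 | h x ≠ h' x}).toReal ≤
        ((Ps.map Prod.fst) {x : 𝒳 | h x ≠ h' x}).toReal + sSup Etrue := by
    intro h hh h' hh'
    have hm := le_csSup hEbdd (⟨h, hh, h', hh', rfl⟩ : _ ∈ Etrue)
    have h1 : ((Pt.map Prod.fst) {x : 𝒳 | h x ≠ h' x}).toReal
        - ((Ps.map Prod.fst) {x : 𝒳 | h x ≠ h' x}).toReal ≤
        |((Ps.map Prod.fst) {x : 𝒳 | h x ≠ h' x}).toReal
          - ((Pt.map Prod.fst) {x : 𝒳 | h x ≠ h' x}).toReal| := by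
      rw [abs_sub_comm]
      exact le_abs_self _
    linarith
  -- the deviation radius
  set a : ℝ := 2 * Real.sqrt (Real.log (4 / ρ) / (N : ℝ)) with ha
  have ha0 : 0 ≤ a := by positivity
  have hlog2 : (0:ℝ) < Real.log 2 := Real.log_pos (by norm_num)
  have hlogN : Real.log 2 ≤ Real.log (2 * (N : ℝ)) := by
    apply Real.log_le_log (by norm_num)
    nlinarith [hN0, (by exact_mod_cast hN : (1:ℝ) ≤ N)]
  have hL4 : Real.log (4 / ρ) = Real.log 2 + Real.log (2 / ρ) := by
    rw [show (4:ℝ) / ρ = 2 * (2 / ρ) by ring]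
    exact Real.log_mul (by norm_num) (ne_of_gt (by positivity))
  have hta : 2 * a < t := by
    have hd1' : (1:ℝ) ≤ d := by exact_mod_cast hd1
    have hnum : Real.log (4 / ρ) < 2 * (d:ℝ) * Real.log (2 * (N:ℝ)) + Real.log (2 / ρ) := by
      rw [hL4]
      nlinarith
    have hlt : Real.log (4 / ρ) / (N:ℝ)
        < (2 * (d:ℝ) * Real.log (2 * (N:ℝ)) + Real.log (2 / ρ)) / (N:ℝ) :=
      (div_lt_div_iff_of_pos_right hN0).mpr hnum
    have hL40 : 0 ≤ Real.log (4 / ρ) := Real.log_nonneg (by rw [le_div_iff₀ hρ0]; linarith)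
    have hs := Real.sqrt_lt_sqrt (div_nonneg hL40 (le_of_lt hN0)) hlt
    rw [ha, hT]
    linarith
  -- choose a near-optimal witness pair
  obtain ⟨r, ⟨h0, hh0, h0', hh0', hre⟩, hrlt⟩ :=
    exists_lt_of_lt_csSup hEne (show sSup Etrue - (t - 2 * a) < sSup Etrue by linarith)
  subst hre
  set A0 : Set 𝒳 := {x : 𝒳 | h0 x ≠ h0' x} with hA0def
  have hA0m : MeasurableSet A0 := hAmeas h0 hh0 h0' hh0'
  set p : ℝ := ((Ps.map Prod.fst) A0).toReal with hp
  set q : ℝ := ((Pt.map Prod.fst) A0).toReal with hq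
  -- good events
  set G1 : Set (Fin N → 𝒳) :=
    {S | |(∑ i : Fin N, A0.indicator (fun _ => (1:ℝ)) (S i)) - N * p| ≤ N * a} with hG1def
  set G2 : Set (Fin N → 𝒳) :=
    {T | |(∑ i : Fin N, A0.indicator (fun _ => (1:ℝ)) (T i)) - N * q| ≤ N * a} with hG2def
  have hsummeas : Measurable (fun S : Fin N → 𝒳 => ∑ i : Fin N, A0.indicator (fun _ => (1:ℝ)) (S i)) :=
    Finset.measurable_sum _ (fun i _ => (measurable_const.indicator hA0m).comp (measurable_pi_apply i))
  have hG1m : MeasurableSet G1 :=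
    measurableSet_le ((hsummeas.sub measurable_const).abs) measurable_const
  have hG2m : MeasurableSet G2 :=
    measurableSet_le ((hsummeas.sub measurable_const).abs) measurable_const
  have hG1c : (Measure.pi fun _ : Fin N => Ps.map Prod.fst) G1ᶜ ≤ ENNReal.ofReal (ρ / 2) := by
    have hdev := dev_bound (Ps.map Prod.fst) hA0m N hN ρ hρ0 hρ1
    have heq : G1ᶜ = {S : Fin N → 𝒳 | (N : ℝ) * (2 * Real.sqrt (Real.log (4 / ρ) / N)) <
        |(∑ i : Fin N, A0.indicator (fun _ => (1 : ℝ)) (S i)) - N * ((Ps.map Prod.fst) A0).toReal|} := by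
      ext S
      simp only [hG1def, Set.mem_compl_iff, Set.mem_setOf_eq, not_le, ← ha, ← hp]
    rw [heq]
    exact hdev
  have hG2c : (Measure.pi fun _ : Fin N => Pt.map Prod.fst) G2ᶜ ≤ ENNReal.ofReal (ρ / 2) := by
    have hdev := dev_bound (Pt.map Prod.fst) hA0m N hN ρ hρ0 hρ1
    have heq : G2ᶜ = {T : Fin N → 𝒳 | (N : ℝ) * (2 * Real.sqrt (Real.log (4 / ρ) / N)) <
        |(∑ i : Fin N, A0.indicator (fun _ => (1 : ℝ)) (T i)) - N * ((Pt.map Prod.fst) A0).toReal|} := by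
      ext T
      simp only [hG2def, Set.mem_compl_iff, Set.mem_setOf_eq, not_le, ← ha, ← hq]
    rw [heq]
    exact hdev
  -- inclusion of the good event in the target event
  have hsub' : G1 ×ˢ G2 ⊆ {ST : (Fin N → 𝒳) × (Fin N → 𝒳) | ∀ h ∈ ℋ,
      εt h ≤ εs h + (1 / 2) * dHH ST.1 ST.2 + t + sInf { r : ℝ | ∃ h ∈ ℋ, r = εs h + εt h }} := by
    rintro ⟨S, T⟩ ⟨hS, hT⟩
    intro h hh
    show εt h ≤ εs h + (1 / 2) * dHH S T + t + sInf { r : ℝ | ∃ h ∈ ℋ, r = εs h + εt h }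
    simp only [hG1def, Set.mem_setOf_eq] at hS
    simp only [hG2def, Set.mem_setOf_eq] at hT
    -- empirical counts
    have hcS : (∑ i : Fin N, A0.indicator (fun _ => (1:ℝ)) (S i))
        = ((Finset.univ.filter fun i : Fin N => h0 (S i) ≠ h0' (S i)).card : ℝ) := by
      rw [Finset.card_filter]
      push_cast
      apply Finset.sum_congr rfl
      intro i _
      rw [Set.indicator_apply]
      by_cases hx : h0 (S i) ≠ h0' (S i)
      · simp [hA0def, hx]
      · simp [hA0def, hx]
    have hcT : (∑ i : Fin N, A0.indicator (fun _ => (1:ℝ)) (T i))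
        = ((Finset.univ.filter fun i : Fin N => h0 (T i) ≠ h0' (T i)).card : ℝ) := by
      rw [Finset.card_filter]
      push_cast
      apply Finset.sum_congr rfl
      intro i _
      rw [Set.indicator_apply]
      by_cases hx : h0 (T i) ≠ h0' (T i)
      · simp [hA0def, hx]
      · simp [hA0def, hx]
    set xS : ℝ := (∑ i : Fin N, A0.indicator (fun _ => (1:ℝ)) (S i)) / N with hxS
    set xT : ℝ := (∑ i : Fin N, A0.indicator (fun _ => (1:ℝ)) (T i)) / N with hxT
    have hfrac : |xS - xT| ≤ (1 / 2) * dHH S T := by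
      rw [hdHH]
      have hmem : |xS - xT| ∈ { r : ℝ | ∃ h ∈ ℋ, ∃ h' ∈ ℋ, r =
          |((Finset.univ.filter fun i : Fin N => h (S i) ≠ h' (S i)).card : ℝ) / N
            - ((Finset.univ.filter fun i : Fin N => h (T i) ≠ h' (T i)).card : ℝ) / N| } := by
        refine ⟨h0, hh0, h0', hh0', ?_⟩
        rw [hxS, hxT, hcS, hcT]
      have := le_csSup (hbddE S T) hmem
      linarith
    have hdevS : |xS - p| ≤ a := by
      have heq : xS - p = ((∑ i : Fin N, A0.indicator (fun _ => (1:ℝ)) (S i)) - N * p) / N := by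
        rw [hxS]; field_simp
      rw [heq, abs_div, abs_of_pos hN0, div_le_iff₀ hN0]
      linarith
    have hdevT : |xT - q| ≤ a := by
      have heq : xT - q = ((∑ i : Fin N, A0.indicator (fun _ => (1:ℝ)) (T i)) - N * q) / N := by
        rw [hxT]; field_simp
      rw [heq, abs_div, abs_of_pos hN0, div_le_iff₀ hN0]
      linarith
    have hMle : sSup Etrue ≤ (1 / 2) * dHH S T + t := by
      have h1 : |p - q| ≤ |p - xS| + |xS - q| := abs_sub_le _ _ _
      have h2 : |xS - q| ≤ |xS - xT| + |xT - q| := abs_sub_le _ _ _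
      have h3 : |p - xS| = |xS - p| := abs_sub_comm _ _
      linarith
    have hchain : ∀ h' ∈ ℋ, εt h ≤ εs h + (1 / 2) * dHH S T + t + (εs h' + εt h') := by
      intro h' hh'
      have k1 := key1 h hh h' hh'
      have k2 := key2 h hh h' hh'
      have k3 := key3 h hh h' hh'
      linarith
    have hfin : εt h - εs h - (1 / 2) * dHH S T - t ≤ sInf { r : ℝ | ∃ h ∈ ℋ, r = εs h + εt h } := by
      apply le_csInf hΛne
      rintro r ⟨h', hh', rfl⟩
      linarith [hchain h' hh']
    linarith
  -- final measure arithmetic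
  have hGc : μ ((G1 ×ˢ G2)ᶜ) ≤ ENNReal.ofReal ρ := by
    have hsubc : (G1 ×ˢ G2)ᶜ ⊆ (G1ᶜ ×ˢ (Set.univ : Set (Fin N → 𝒳)))
        ∪ ((Set.univ : Set (Fin N → 𝒳)) ×ˢ G2ᶜ) := by
      intro x hx
      rw [Set.mem_compl_iff, Set.mem_prod] at hx
      rcases not_and_or.mp hx with h1 | h2
      · left; exact ⟨h1, Set.mem_univ _⟩
      · right; exact ⟨Set.mem_univ _, h2⟩
    calc μ ((G1 ×ˢ G2)ᶜ) ≤ μ (G1ᶜ ×ˢ (Set.univ : Set (Fin N → 𝒳)))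
          + μ ((Set.univ : Set (Fin N → 𝒳)) ×ˢ G2ᶜ) :=
        le_trans (measure_mono hsubc) (measure_union_le _ _)
    _ = (Measure.pi fun _ : Fin N => Ps.map Prod.fst) G1ᶜ
          * (Measure.pi fun _ : Fin N => Pt.map Prod.fst) Set.univ
        + (Measure.pi fun _ : Fin N => Ps.map Prod.fst) Set.univ
          * (Measure.pi fun _ : Fin N => Pt.map Prod.fst) G2ᶜ := by
        rw [hμ, Measure.prod_prod, Measure.prod_prod]
    _ = (Measure.pi fun _ : Fin N => Ps.map Prod.fst) G1ᶜ
        + (Measure.pi fun _ : Fin N => Pt.map Prod.fst) G2ᶜ := by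
        rw [measure_univ, measure_univ, mul_one, one_mul]
    _ ≤ ENNReal.ofReal (ρ / 2) + ENNReal.ofReal (ρ / 2) := add_le_add hG1c hG2c
    _ = ENNReal.ofReal ρ := by
        rw [← ENNReal.ofReal_add (by linarith) (by linarith)]
        congr 1
        ring
  have hone : (1 : ENNReal) ≤ μ (G1 ×ˢ G2) + ENNReal.ofReal ρ := by
    calc (1 : ENNReal) = μ Set.univ := measure_univ.symm
    _ = μ ((G1 ×ˢ G2) ∪ (G1 ×ˢ G2)ᶜ) := by rw [Set.union_compl_self]
    _ ≤ μ (G1 ×ˢ G2) + μ ((G1 ×ˢ G2)ᶜ) := measure_union_le _ _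
    _ ≤ μ (G1 ×ˢ G2) + ENNReal.ofReal ρ := add_le_add le_rfl hGc
  have hfinal : ENNReal.ofReal (1 - ρ) ≤ μ (G1 ×ˢ G2) := by
    have h1 : ENNReal.ofReal (1 - ρ) + ENNReal.ofReal ρ = 1 := by
      rw [← ENNReal.ofReal_add (by linarith) (le_of_lt hρ0)]
      norm_num
    have h2 : ENNReal.ofReal (1 - ρ) + ENNReal.ofReal ρ ≤ μ (G1 ×ˢ G2) + ENNReal.ofReal ρ := by
      rw [h1]; exact hone
    exact (ENNReal.add_le_add_iff_right ENNReal.ofReal_ne_top).mp h2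
  exact le_trans hfinal (measure_mono hsub')
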